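/- Let b > 0, let k ≥ 1 be an integer, let β ∈ (0,1), and let Y_1,…,Y_k be independent real random variables each having the Laplace distribution with scale b. Set Y = Y_1 + ⋯ + Y_k. Then P( |Y| > 2b·√(2·ln(2/β))·max( √k, √(ln(2/β)) ) ) ≤ β. -/

import Mathlib

/-! Chernoff's method. A Laplace variable of scale `b` has moment generating function
`(1 - (b t)²)⁻¹` for `|t| < 1 / b`, which is at most `exp (2 (b t)²)` once `(b t)² ≤ 1 / 2`;
by independence the sum of `k` of them has moment generating function at most
`exp (2 k (b t)²)`, so both tails give `P(|Y| ≥ ε) ≤ 2 exp (-t ε + 2 k (b t)²)`.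
With `L = ln (2 / β)`, the choice `b t = √(L / (2 max k L))` makes `t ε = 2 L` and
`2 k (b t)² ≤ L`, so the bound is `2 exp (-L) = β`. -/

open MeasureTheory ProbabilityTheory

/-- The Laplace distribution on `ℝ` with scale `b`, given by the density
`x ↦ (2b)⁻¹ · exp(−|x|/b)` with respect to Lebesgue measure. -/
noncomputable def laplaceMeasure (b : ℝ) : Measure ℝ :=
  volume.withDensity fun x => ENNReal.ofReal ((2 * b)⁻¹ * Real.exp (-|x| / b))

open Real Set

lemma exp_mul_sub_mul_abs_eqOn_Iic (a t : ℝ) :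
    EqOn (fun x => exp (t * x - a * |x|)) (fun x => exp ((t + a) * x)) (Iic 0) :=
  fun x (hx : x ≤ 0) => by simp only [abs_of_nonpos hx]; ring_nf

lemma exp_mul_sub_mul_abs_eqOn_Ioi (a t : ℝ) :
    EqOn (fun x => exp (t * x - a * |x|)) (fun x => exp ((t - a) * x)) (Ioi 0) :=
  fun x (hx : 0 < x) => by simp only [abs_of_pos hx]; ring_nf

lemma integrableOn_exp_mul_sub_mul_abs_Iic {a t : ℝ} (ht : |t| < a) :
    IntegrableOn (fun x => exp (t * x - a * |x|)) (Iic 0) :=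
  (integrableOn_exp_mul_Iic (by linarith [neg_abs_le t]) 0).congr_fun
    (exp_mul_sub_mul_abs_eqOn_Iic a t).symm measurableSet_Iic

lemma integrableOn_exp_mul_sub_mul_abs_Ioi {a t : ℝ} (ht : |t| < a) :
    IntegrableOn (fun x => exp (t * x - a * |x|)) (Ioi 0) :=
  (integrableOn_exp_mul_Ioi (by linarith [le_abs_self t]) 0).congr_fun
    (exp_mul_sub_mul_abs_eqOn_Ioi a t).symm measurableSet_Ioi

lemma integrable_exp_mul_sub_mul_abs {a t : ℝ} (ht : |t| < a) :
    Integrable fun x => exp (t * x - a * |x|) := by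
  rw [← integrableOn_univ, ← Iic_union_Ioi (a := (0 : ℝ))]
  exact (integrableOn_exp_mul_sub_mul_abs_Iic ht).union
    (integrableOn_exp_mul_sub_mul_abs_Ioi ht)

lemma integral_exp_mul_sub_mul_abs {a t : ℝ} (ht : |t| < a) :
    ∫ x, exp (t * x - a * |x|) = 2 * a / (a ^ 2 - t ^ 2) := by
  have h₁ : 0 < t + a := by linarith [neg_abs_le t]
  have h₂ : t - a < 0 := by linarith [le_abs_self t]
  rw [← intervalIntegral.integral_Iic_add_Ioi (integrableOn_exp_mul_sub_mul_abs_Iic ht)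
      (integrableOn_exp_mul_sub_mul_abs_Ioi ht),
    setIntegral_congr_fun measurableSet_Iic (exp_mul_sub_mul_abs_eqOn_Iic a t),
    setIntegral_congr_fun measurableSet_Ioi (exp_mul_sub_mul_abs_eqOn_Ioi a t),
    integral_exp_mul_Iic h₁, integral_exp_mul_Ioi h₂]
  have : a ^ 2 - t ^ 2 ≠ 0 := by nlinarith
  simp only [mul_zero, Real.exp_zero]
  field_simp [h₁.ne', h₂.ne]
  ring

lemma measurable_laplaceDensity (b : ℝ) :
    Measurable fun x : ℝ => ENNReal.ofReal ((2 * b)⁻¹ * exp (-|x| / b)) := by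
  fun_prop

lemma laplaceDensity_toReal_mul_exp {b : ℝ} (hb : 0 < b) (t x : ℝ) :
    (ENNReal.ofReal ((2 * b)⁻¹ * exp (-|x| / b))).toReal * exp (t * x)
      = (2 * b)⁻¹ * exp (t * x - b⁻¹ * |x|) := by
  rw [ENNReal.toReal_ofReal (by positivity), mul_assoc, ← exp_add]
  ring_nf

lemma integrable_exp_mul_laplaceMeasure {b t : ℝ} (hb : 0 < b) (ht : |t| < b⁻¹) :
    Integrable (fun x => exp (t * x)) (laplaceMeasure b) := by
  rw [laplaceMeasure, integrable_withDensity_iff_integrable_smul' (measurable_laplaceDensity b)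
    (.of_forall fun _ => ENNReal.ofReal_lt_top)]
  simp only [smul_eq_mul, laplaceDensity_toReal_mul_exp hb]
  exact (integrable_exp_mul_sub_mul_abs ht).const_mul _

lemma abs_lt_inv_iff_sq_mul_lt_one {b t : ℝ} (hb : 0 < b) : |t| < b⁻¹ ↔ (b * t) ^ 2 < 1 := by
  rw [sq_lt_one_iff_abs_lt_one, abs_mul, abs_of_pos hb, ← mul_inv_cancel₀ hb.ne',
    mul_lt_mul_iff_right₀ hb]

lemma mgf_id_laplaceMeasure {b t : ℝ} (hb : 0 < b) (ht : |t| < b⁻¹) :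
    mgf id (laplaceMeasure b) t = (1 - (b * t) ^ 2)⁻¹ := by
  rw [mgf, laplaceMeasure, integral_withDensity_eq_integral_toReal_smul
    (measurable_laplaceDensity b) (.of_forall fun _ => ENNReal.ofReal_lt_top)]
  simp only [id, smul_eq_mul, laplaceDensity_toReal_mul_exp hb]
  rw [integral_const_mul, integral_exp_mul_sub_mul_abs ht]
  have : 1 - (b * t) ^ 2 ≠ 0 := by linarith [(abs_lt_inv_iff_sq_mul_lt_one hb).mp ht]
  field_simp

lemma inv_one_sub_le_exp_two_mul {x : ℝ} (hx₀ : 0 ≤ x) (hx : x ≤ 1 / 2) :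
    (1 - x)⁻¹ ≤ exp (2 * x) :=
  calc (1 - x)⁻¹ ≤ 1 + 2 * x := by
        rw [inv_le_iff_one_le_mul₀ (by linarith)]
        nlinarith
    _ ≤ exp (2 * x) := by linarith [add_one_le_exp (2 * x)]

section Chernoff

variable {Ω : Type*} [MeasurableSpace Ω] {μ : Measure Ω}

theorem measureReal_abs_ge_le_exp_mul_mgf [IsFiniteMeasure μ] {X : Ω → ℝ} {t : ℝ} (ε : ℝ)
    (ht : 0 ≤ t) (h₁ : Integrable (fun ω => exp (t * X ω)) μ)
    (h₂ : Integrable (fun ω => exp (-t * X ω)) μ) :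
    μ.real {ω | ε ≤ |X ω|} ≤ exp (-t * ε) * (mgf X μ t + mgf X μ (-t)) := by
  have hsub : {ω | ε ≤ |X ω|} ⊆ {ω | ε ≤ X ω} ∪ {ω | X ω ≤ -ε} :=
    fun ω (hω : ε ≤ |X ω|) => (le_abs'.mp hω).symm
  calc μ.real {ω | ε ≤ |X ω|} ≤ μ.real {ω | ε ≤ X ω} + μ.real {ω | X ω ≤ -ε} :=
        (measureReal_mono hsub).trans (measureReal_union_le _ _)
    _ ≤ exp (-t * ε) * mgf X μ t + exp (-(-t) * -ε) * mgf X μ (-t) :=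
        add_le_add (measure_ge_le_exp_mul_mgf ε ht h₁)
          (measure_le_le_exp_mul_mgf (-ε) (neg_nonpos.mpr ht) h₂)
    _ = exp (-t * ε) * (mgf X μ t + mgf X μ (-t)) := by
        rw [neg_mul_neg, mul_add]

variable {b t : ℝ} {X : Ω → ℝ}

lemma integrable_exp_mul_of_map_eq_laplaceMeasure (hX : Measurable X)
    (hlap : μ.map X = laplaceMeasure b) (hb : 0 < b) (ht : |t| < b⁻¹) :
    Integrable (fun ω => exp (t * X ω)) μ := by
  have := integrable_exp_mul_laplaceMeasure hb ht
  rwa [← hlap, integrable_map_measure (by fun_prop) hX.aemeasurable] at this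

lemma mgf_of_map_eq_laplaceMeasure (hX : Measurable X) (hlap : μ.map X = laplaceMeasure b)
    (hb : 0 < b) (ht : |t| < b⁻¹) : mgf X μ t = (1 - (b * t) ^ 2)⁻¹ := by
  rw [← mgf_id_map hX.aemeasurable, hlap, mgf_id_laplaceMeasure hb ht]

variable {ι : Type*} [Fintype ι] {Y : ι → Ω → ℝ}

lemma mgf_sum_le_of_map_eq_laplaceMeasure (hmeas : ∀ i, Measurable (Y i))
    (hindep : iIndepFun Y μ) (hlap : ∀ i, μ.map (Y i) = laplaceMeasure b) (hb : 0 < b)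
    (ht : (b * t) ^ 2 ≤ 1 / 2) :
    mgf (∑ i, Y i) μ t ≤ exp (2 * Fintype.card ι * (b * t) ^ 2) := by
  have ht' : |t| < b⁻¹ := (abs_lt_inv_iff_sq_mul_lt_one hb).mpr (by linarith)
  rw [hindep.mgf_sum hmeas, Finset.prod_congr rfl fun i _ =>
      mgf_of_map_eq_laplaceMeasure (hmeas i) (hlap i) hb ht', Finset.prod_const,
    Finset.card_univ, mul_comm 2, mul_assoc, exp_nat_mul]
  exact pow_le_pow_left₀ (inv_nonneg.mpr (by linarith))
    (inv_one_sub_le_exp_two_mul (by positivity) ht) _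

theorem measureReal_abs_sum_ge_le_of_map_eq_laplaceMeasure [IsFiniteMeasure μ]
    (hmeas : ∀ i, Measurable (Y i)) (hindep : iIndepFun Y μ)
    (hlap : ∀ i, μ.map (Y i) = laplaceMeasure b) (hb : 0 < b) (ε : ℝ) (ht₀ : 0 ≤ t)
    (ht : (b * t) ^ 2 ≤ 1 / 2) :
    μ.real {ω | ε ≤ |∑ i, Y i ω|}
      ≤ 2 * exp (-t * ε + 2 * Fintype.card ι * (b * t) ^ 2) := by
  have hint : ∀ s : ℝ, (b * s) ^ 2 ≤ 1 / 2 →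
      Integrable (fun ω => exp (s * (∑ i, Y i) ω)) μ :=
    fun s hs => hindep.integrable_exp_mul_sum hmeas fun i _ =>
      integrable_exp_mul_of_map_eq_laplaceMeasure (hmeas i) (hlap i) hb
        ((abs_lt_inv_iff_sq_mul_lt_one hb).mpr (by linarith))
  have hchernoff := measureReal_abs_ge_le_exp_mul_mgf (X := ∑ i, Y i) ε ht₀ (hint t ht)
    (hint (-t) (by rwa [mul_neg, neg_sq]))
  simp only [Finset.sum_apply] at hchernoff
  calc _ ≤ _ := hchernoff
    _ ≤ exp (-t * ε) * (exp (2 * Fintype.card ι * (b * t) ^ 2)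
          + exp (2 * Fintype.card ι * (b * t) ^ 2)) := by
        gcongr
        · exact mgf_sum_le_of_map_eq_laplaceMeasure hmeas hindep hlap hb ht
        · rw [← neg_sq, ← mul_neg]
          exact mgf_sum_le_of_map_eq_laplaceMeasure hmeas hindep hlap hb (by rwa [mul_neg, neg_sq])
    _ = _ := by rw [exp_add]; ring

end Chernoff

lemma exists_chernoff_parameter {b L k : ℝ} (hb : 0 < b) (hL : 0 < L) :
    ∃ t, 0 ≤ t ∧ (b * t) ^ 2 ≤ 1 / 2 ∧
      -t * (2 * b * √(2 * L) * max √k √L) + 2 * k * (b * t) ^ 2 ≤ -L := by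
  set m := max k L
  have hm : 0 < m := hL.trans_le (le_max_right k L)
  have hbt : b * (√(L / (2 * m)) / b) = √(L / (2 * m)) := mul_div_cancel₀ _ hb.ne'
  have hsq : (b * (√(L / (2 * m)) / b)) ^ 2 = L / (2 * m) := by
    rw [hbt, sq_sqrt (by positivity)]
  refine ⟨√(L / (2 * m)) / b, by positivity, ?_, ?_⟩
  · rw [hsq, div_le_iff₀ (by positivity)]
    linarith [le_max_right k L]
  have hmax : max √k √L = √m := (Real.sqrt_monotone.map_max).symm
  have hroot : √(L / (2 * m)) * √(2 * L) * √m = L := by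
    rw [← sqrt_mul (by positivity), ← sqrt_mul (by positivity),
      show L / (2 * m) * (2 * L) * m = L ^ 2 by field_simp, sqrt_sq hL.le]
  have hlin : √(L / (2 * m)) / b * (2 * b * √(2 * L) * √m) = 2 * L := by
    calc _ = 2 * (√(L / (2 * m)) * √(2 * L) * √m) := by field_simp
      _ = 2 * L := by rw [hroot]
  have hquad : 2 * k * (L / (2 * m)) ≤ L := by
    rw [show 2 * k * (L / (2 * m)) = k * L / m by field_simp, div_le_iff₀ hm]
    nlinarith [le_max_left k L]
  rw [hmax, neg_mul, hlin, hsq]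
  linarith

theorem sum_of_laplace_tail_bound_general
    {Ω : Type*} [MeasurableSpace Ω] (μ : Measure Ω) [IsProbabilityMeasure μ]
    (b : ℝ) (hb : 0 < b) (k : ℕ) (β : ℝ)
    (hβ : β ∈ Set.Ioo (0 : ℝ) 1)
    (Y : Fin k → Ω → ℝ) (hmeas : ∀ i, Measurable (Y i))
    (hindep : iIndepFun Y μ)
    (hlap : ∀ i, μ.map (Y i) = laplaceMeasure b) :
    μ {ω | 2 * b * Real.sqrt (2 * Real.log (2 / β)) *
        max (Real.sqrt k) (Real.sqrt (Real.log (2 / β))) < |∑ i, Y i ω|}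
      ≤ ENNReal.ofReal β := by
  obtain ⟨hβ₀, hβ₁⟩ := hβ
  have hL : 0 < log (2 / β) := log_pos ((one_lt_div hβ₀).mpr (by linarith))
  obtain ⟨t, ht₀, ht, hexponent⟩ := exists_chernoff_parameter (k := k) hb hL
  set ε := 2 * b * √(2 * log (2 / β)) * max √k √(log (2 / β))
  have hchernoff :=
    measureReal_abs_sum_ge_le_of_map_eq_laplaceMeasure hmeas hindep hlap hb ε ht₀ ht
  rw [Fintype.card_fin] at hchernoff
  calc _ ≤ μ {ω | ε ≤ |∑ i, Y i ω|} :=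
        measure_mono (ofPred_subset_ofPred.mpr fun _ => le_of_lt)
    _ = ENNReal.ofReal (μ.real _) := (ofReal_measureReal).symm
    _ ≤ ENNReal.ofReal (2 * exp (-log (2 / β))) :=
        ENNReal.ofReal_le_ofReal <| hchernoff.trans <|
          mul_le_mul_of_nonneg_left (exp_le_exp.mpr hexponent) zero_le_two
    _ = ENNReal.ofReal β := by
        rw [exp_neg, exp_log (by positivity), inv_div]
        field_simp

theorem sum_of_laplace_tail_bound
    {Ω : Type*} [MeasurableSpace Ω] (μ : Measure Ω) [IsProbabilityMeasure μ]
    (b : ℝ) (hb : 0 < b) (k : ℕ) (hk : 1 ≤ k) (β : ℝ)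
    (hβ : β ∈ Set.Ioo (0 : ℝ) 1)
    (Y : Fin k → Ω → ℝ) (hmeas : ∀ i, Measurable (Y i))
    (hindep : iIndepFun Y μ)
    (hlap : ∀ i, μ.map (Y i) = laplaceMeasure b) :
    μ {ω | 2 * b * Real.sqrt (2 * Real.log (2 / β)) *
        max (Real.sqrt k) (Real.sqrt (Real.log (2 / β))) < |∑ i, Y i ω|}
      ≤ ENNReal.ofReal β :=
  sum_of_laplace_tail_bound_general μ b hb k β hβ Y hmeas hindep hlap
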